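/- arXiv:1807.01338 — 3 statements merged into one kernel-verified Lean document; each statement's English description precedes it below -/
import Mathlib

section
/- Let Γ be a group acting on a set S with finitely many orbits, such that every stabilizer Γ_s (s ∈ S) is finitely generated as a group. Then the free abelian group Z[S] on S, with its induced Z[Γ]-module structure, is a finitely presented Z[Γ]-module. -/
/-!
Pick a representative `q.out` in each orbit `q`. The `k[Γ]`-linear map `⊕_q k[Γ] → k[S]`
sending the basis vector `e_q` to `q.out` is onto, and its kernel is spanned by the vectors
`(t - 1) e_q` with `t` in a generating set of the stabilizer of `q.out`: the identity
`gh - 1 = g(h - 1) + (g - 1)` shows that these span all `(h - 1) e_q` with `h` in the stabilizer,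
and modulo those relations the map has the left inverse `g • q.out ↦ g e_q`. Finitely many orbits and finitely generated
stabilizers therefore give a finite presentation.
-/

open MonoidAlgebra MulAction

namespace MonoidAlgebra

variable {k G : Type*} [Ring k] [Group G]

theorem single_sub_one_mem_span_of_mem_closure {T : Set G} {g : G}
    (hg : g ∈ Subgroup.closure T) :
    single g (1 : k) - 1 ∈ Submodule.span k[G] ((fun t ↦ single t (1 : k) - 1) '' T) := by
  set I := Submodule.span k[G] ((fun t ↦ single t (1 : k) - 1) '' T)
  induction hg using Subgroup.closure_induction with
  | mem t ht => exact Submodule.subset_span ⟨t, ht, rfl⟩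
  | one => simp [one_def]
  | mul x y _ _ hx hy =>
    have : single (x * y) (1 : k) - 1 =
        single x (1 : k) • (single y (1 : k) - 1) + (single x 1 - 1) := by
      simp [smul_eq_mul, mul_sub, single_mul_single]
    rw [this]
    exact I.add_mem (I.smul_mem _ hy) hx
  | inv x _ hx =>
    have : single x⁻¹ (1 : k) - 1 = -(single x⁻¹ (1 : k) • (single x (1 : k) - 1)) := by
      simp [smul_eq_mul, mul_sub, single_mul_single, one_def]
    rw [this]
    exact I.neg_mem (I.smul_mem _ hx)

end MonoidAlgebra

theorem MulAction.exists_smul_out_eq {G α : Type*} [Group G] [MulAction G α] (x : α) :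
    ∃ g : G, g • (Quotient.mk'' x : orbitRel.Quotient G α).out = x :=
  mem_orbit_iff.mp <| by
    rw [← orbitRel.Quotient.orbit_eq_orbit_out _ Quotient.out_eq']
    exact orbitRel.Quotient.mem_orbit.mpr rfl

namespace Representation

variable {k Γ S : Type*} [CommRing k] [Group Γ] [MulAction Γ S]

theorem single_smul_ofMulAction_single (g : Γ) (r : k) (x : S) :
    single g r • (ofMulAction k Γ S).asModuleEquiv.symm (single x 1) =
      (ofMulAction k Γ S).asModuleEquiv.symm (single (g • x) r) := by
  simp only [single_smul, LinearEquiv.apply_symm_apply, ofMulAction_single, smul_single,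
    smul_eq_mul, mul_one]
  rfl

variable (k Γ S) in
noncomputable def ofMulActionCover :
    (orbitRel.Quotient Γ S →₀ k[Γ]) →ₗ[k[Γ]] (ofMulAction k Γ S).asModule :=
  Finsupp.linearCombination k[Γ] fun q ↦ (ofMulAction k Γ S).asModuleEquiv.symm (single q.out 1)

theorem ofMulActionCover_single_single (q : orbitRel.Quotient Γ S) (g : Γ) (r : k) :
    ofMulActionCover k Γ S (Finsupp.single q (single g r)) =
      (ofMulAction k Γ S).asModuleEquiv.symm (single (g • q.out) r) := by
  rw [ofMulActionCover, Finsupp.linearCombination_single, single_smul_ofMulAction_single]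

theorem ofMulActionCover_surjective : Function.Surjective (ofMulActionCover k Γ S) := by
  choose σ hσ using exists_smul_out_eq (G := Γ) (α := S)
  have hsingle (x : S) (r : k) :
      (ofMulAction k Γ S).asModuleEquiv.symm (single x r) ∈
        LinearMap.range (ofMulActionCover k Γ S) :=
    ⟨Finsupp.single (Quotient.mk'' x) (single (σ x) r), by rw [ofMulActionCover_single_single, hσ]⟩
  intro v
  rw [← LinearMap.mem_range, ← (ofMulAction k Γ S).asModuleEquiv.symm_apply_apply v]
  induction (ofMulAction k Γ S).asModuleEquiv v using MonoidAlgebra.induction with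
  | zero => simp
  | single_add x r f _ _ ih => rw [map_add]; exact add_mem (hsingle x r) ih

noncomputable def stabilizerRelations (T : orbitRel.Quotient Γ S → Set Γ) :
    Submodule k[Γ] (orbitRel.Quotient Γ S →₀ k[Γ]) :=
  Submodule.span k[Γ] (⋃ q, (fun t ↦ Finsupp.single q (single t 1 - 1)) '' T q)

theorem stabilizerRelations_le_ker {T : orbitRel.Quotient Γ S → Set Γ}
    (hT : ∀ q, T q ⊆ stabilizer Γ q.out) :
    stabilizerRelations (k := k) T ≤ LinearMap.ker (ofMulActionCover k Γ S) := by
  rw [stabilizerRelations, Submodule.span_le, Set.iUnion_subset_iff]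
  rintro q _ ⟨t, ht, rfl⟩
  simp only [SetLike.mem_coe, LinearMap.mem_ker]
  rw [one_def, Finsupp.single_sub, map_sub,
    ofMulActionCover_single_single, ofMulActionCover_single_single, one_smul,
    mem_stabilizer_iff.mp (hT q ht), sub_self]

theorem single_mem_stabilizerRelations {T : orbitRel.Quotient Γ S → Set Γ}
    {q : orbitRel.Quotient Γ S} {a : k[Γ]}
    (ha : a ∈ Submodule.span k[Γ] ((fun t ↦ single t (1 : k) - 1) '' T q)) :
    Finsupp.single q a ∈ stabilizerRelations T := by
  have := Submodule.mem_map_of_mem (f := Finsupp.lsingle q) ha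
  rw [Submodule.map_span, ← Set.image_comp] at this
  exact Submodule.span_mono (Set.subset_iUnion_of_subset q subset_rfl) this

theorem single_sub_single_mem_stabilizerRelations {T : orbitRel.Quotient Γ S → Set Γ}
    {q : orbitRel.Quotient Γ S} (hT : stabilizer Γ q.out ≤ Subgroup.closure (T q))
    {g g' : Γ} (h : g • q.out = g' • q.out) (r : k) :
    Finsupp.single q (single g r - single g' r) ∈ stabilizerRelations T := by
  have hmem : g'⁻¹ * g ∈ stabilizer Γ q.out := by
    rw [mem_stabilizer_iff, mul_smul, h, inv_smul_smul]
  have hfac : single g r - single g' r = single g' r * (single (g'⁻¹ * g) 1 - 1) := by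
    rw [mul_sub, single_mul_single, mul_inv_cancel_left, mul_one, mul_one]
  rw [hfac]
  exact single_mem_stabilizerRelations
    (Submodule.smul_mem _ _ (single_sub_one_mem_span_of_mem_closure (hT hmem)))

theorem ker_ofMulActionCover {T : orbitRel.Quotient Γ S → Set Γ}
    (hT : ∀ q, Subgroup.closure (T q) = stabilizer Γ q.out) :
    LinearMap.ker (ofMulActionCover k Γ S) = stabilizerRelations T := by
  set K := stabilizerRelations (k := k) T
  refine le_antisymm ?_ (stabilizerRelations_le_ker fun q ↦ hT q ▸ Subgroup.subset_closure)
  choose σ hσ using exists_smul_out_eq (G := Γ) (α := S)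
  let ψ : k[S] →+ (orbitRel.Quotient Γ S →₀ k[Γ]) ⧸ K :=
    (Finsupp.liftAddHom fun x ↦ K.mkQ.toAddMonoidHom.comp
      ((Finsupp.singleAddHom (Quotient.mk'' x)).comp (singleAddHom (σ x)))).comp
      coeffAddEquiv.toAddMonoidHom
  have hψ_single (q : orbitRel.Quotient Γ S) (g : Γ) (r : k) :
      ψ ((ofMulAction k Γ S).asModuleEquiv (ofMulActionCover k Γ S (Finsupp.single q (single g r))))
        = K.mkQ (Finsupp.single q (single g r)) := by
    have hq : (Quotient.mk'' (g • q.out) : orbitRel.Quotient Γ S) = q := by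
      rw [Quotient.mk''_eq_mk, orbitRel.Quotient.quotient_smul_eq]
      exact Quotient.out_eq q
    have hσq := hσ (g • q.out)
    rw [hq] at hσq
    rw [ofMulActionCover_single_single, LinearEquiv.apply_symm_apply]
    simp only [ψ, AddEquiv.toAddMonoidHom_eq_coe, AddMonoidHom.coe_comp, AddMonoidHom.coe_coe,
      Function.comp_apply, coeffAddEquiv_apply, coeff_single, Finsupp.liftAddHom_apply,
      LinearMap.toAddMonoidHom_coe, singleAddHom_apply, single_zero, Finsupp.singleAddHom_apply,
      Finsupp.single_zero, Submodule.mkQ_apply, Submodule.Quotient.mk_zero,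
      Finsupp.sum_single_index, hq]
    rw [Submodule.Quotient.eq, ← Finsupp.single_sub]
    exact single_sub_single_mem_stabilizerRelations (hT q).ge hσq r
  have hψ (y) : ψ ((ofMulAction k Γ S).asModuleEquiv (ofMulActionCover k Γ S y)) = K.mkQ y := by
    induction y using Finsupp.induction_linear with
    | zero => simp
    | add y z hy hz => simp only [map_add, hy, hz]
    | single q a =>
      induction a using MonoidAlgebra.induction_linear with
      | zero => simp
      | add a b ha hb => simp only [Finsupp.single_add, map_add, ha, hb]
      | single g r => exact hψ_single q g r
  intro y hy
  rw [← Submodule.Quotient.mk_eq_zero, ← Submodule.mkQ_apply, ← hψ, LinearMap.mem_ker.mp hy,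
    map_zero, map_zero]

theorem finitePresentation_ofMulAction [Finite (orbitRel.Quotient Γ S)]
    (hstab : ∀ s : S, Group.FG (stabilizer Γ s)) :
    Module.FinitePresentation k[Γ] (ofMulAction k Γ S).asModule := by
  choose T hT hTfin using fun q : orbitRel.Quotient Γ S ↦
    (Subgroup.fg_iff _).mp ((Group.fg_iff_subgroup_fg _).mp (hstab q.out))
  refine Module.finitePresentation_of_free_of_surjective _ ofMulActionCover_surjective ?_
  rw [ker_ofMulActionCover hT]
  exact Submodule.fg_span (Set.finite_iUnion fun q ↦ (hTfin q).image _)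

end Representation

/-- Let `Γ` act on a set `S` with finitely many orbits and finitely generated
stabilizers.  Then the permutation module `ℤ[S]` is a finitely presented
`ℤ[Γ]`-module. -/
theorem stmt_11 {Γ : Type} [Group Γ] {S : Type} [MulAction Γ S]
    (horb : Finite (Quotient (MulAction.orbitRel Γ S)))
    (hstab : ∀ s : S, Group.FG (MulAction.stabilizer Γ s)) :
    Module.FinitePresentation (MonoidAlgebra ℤ Γ)
      (Representation.ofMulAction ℤ Γ S).asModule :=
  Representation.finitePresentation_ofMulAction hstab
end

section
/- Let Γ be a group, G a normal subgroup of Γ, and let Γ act on G by conjugation (writing ^γ g for γgγ⁻¹). Suppose G admits a weakly-finite Γ-equivariant presentation (S₀, R₀), and both G and Γ are finitely generated. Then G admits a finite Γ-equivariant presentation. -/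
namespace Stmt15

variable {Γ : Type} [Group Γ] (G : Subgroup Γ) [G.Normal]

/-- The set `S = Γ·S₀` of conjugates of elements of `S₀ ⊆ G` by elements of `Γ`. -/
def Sset (S₀ : Finset G) : Set G :=
  {g | ∃ γ : Γ, ∃ s ∈ S₀, MulAut.conjNormal γ s = g}

lemma conj_mem_Sset (S₀ : Finset G) (γ : Γ) {g : G} (hg : g ∈ Sset G S₀) :
    MulAut.conjNormal γ g ∈ Sset G S₀ := by
  obtain ⟨γ', s, hs, rfl⟩ := hg
  exact ⟨γ * γ', s, hs, by rw [map_mul]; rfl⟩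

/-- The induced `Γ`-action (by conjugation) on the free group `F(S)`. -/
def actF (S₀ : Finset G) (γ : Γ) : FreeGroup (Sset G S₀) →* FreeGroup (Sset G S₀) :=
  FreeGroup.map fun x => ⟨MulAut.conjNormal γ (x : G), conj_mem_Sset G S₀ γ x.2⟩

/-- The natural map `F(S) → G`. -/
def π (S₀ : Finset G) : FreeGroup (Sset G S₀) →* G :=
  FreeGroup.lift Subtype.val

/-- The conjugation relators `s t s⁻¹ (^s t)⁻¹` for `s, t ∈ S`. -/
def Rconj (S₀ : Finset G) : Set (FreeGroup (Sset G S₀)) :=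
  {w | ∃ s t : Sset G S₀,
    w = FreeGroup.of s * FreeGroup.of t * (FreeGroup.of s)⁻¹ *
      (FreeGroup.of (⟨MulAut.conjNormal ((s : G) : Γ) (t : G),
        conj_mem_Sset G S₀ ((s : G) : Γ) t.2⟩ : Sset G S₀))⁻¹}

/-- `(S₀, R₀)` is a finite `Γ`-equivariant presentation of `G`: the orbit `S = Γ·S₀`
generates `G`, and the kernel of `F(S) → G` is the normal closure of `R = Γ·R₀`. -/
def IsFiniteEquivariantPresentation (S₀ : Finset G) (R₀ : Finset (FreeGroup (Sset G S₀))) :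
    Prop :=
  Function.Surjective (π G S₀) ∧
  MonoidHom.ker (π G S₀) =
    Subgroup.normalClosure {r | ∃ γ : Γ, ∃ r₀ ∈ R₀, actF G S₀ γ r₀ = r}

/-- `(S₀, R₀)` is a weakly-finite `Γ`-equivariant presentation of `G`: the orbit
`S = Γ·S₀` generates `G`, and the kernel of `F(S) → G` is the normal closure of
`R ∪ R_conj`, where `R = Γ·R₀`. -/
def IsWeaklyFiniteEquivariantPresentation (S₀ : Finset G)
    (R₀ : Finset (FreeGroup (Sset G S₀))) : Prop :=
  Function.Surjective (π G S₀) ∧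
  MonoidHom.ker (π G S₀) =
    Subgroup.normalClosure
      ({r | ∃ γ : Γ, ∃ r₀ ∈ R₀, actF G S₀ γ r₀ = r} ∪ Rconj G S₀)

section Aux

variable (S₀ : Finset G)

def sconj (γ : Γ) (x : Sset G S₀) : Sset G S₀ :=
  ⟨MulAut.conjNormal γ (x : G), conj_mem_Sset G S₀ γ x.2⟩

lemma actF_of (γ : Γ) (x : Sset G S₀) :
    actF G S₀ γ (FreeGroup.of x) = FreeGroup.of (sconj G S₀ γ x) :=
  FreeGroup.map.of

lemma sconj_mul (γ δ : Γ) (x : Sset G S₀) :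
    sconj G S₀ (γ * δ) x = sconj G S₀ γ (sconj G S₀ δ x) := by
  apply Subtype.ext; simp [sconj, map_mul]

lemma sconj_one (x : Sset G S₀) : sconj G S₀ 1 x = x := by
  apply Subtype.ext; simp [sconj]

lemma actF_actF (γ δ : Γ) (w : FreeGroup (Sset G S₀)) :
    actF G S₀ γ (actF G S₀ δ w) = actF G S₀ (γ * δ) w := by
  have : (actF G S₀ γ).comp (actF G S₀ δ) = actF G S₀ (γ * δ) := by
    apply FreeGroup.ext_hom; intro a; simp [actF_of, sconj_mul]
  exact DFunLike.congr_fun this w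

lemma actF_one (w : FreeGroup (Sset G S₀)) : actF G S₀ 1 w = w := by
  have : actF G S₀ (1 : Γ) = MonoidHom.id _ := by
    apply FreeGroup.ext_hom; intro a; simp [actF_of, sconj_one]
  rw [this]; rfl

lemma π_of (x : Sset G S₀) : π G S₀ (FreeGroup.of x) = (x : G) :=
  FreeGroup.lift_apply_of

lemma π_actF (γ : Γ) (w : FreeGroup (Sset G S₀)) :
    π G S₀ (actF G S₀ γ w) = MulAut.conjNormal γ (π G S₀ w) := by
  have : (π G S₀).comp (actF G S₀ γ)
      = ((MulAut.conjNormal γ : MulAut G) : G →* G).comp (π G S₀) := by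
    apply FreeGroup.ext_hom; intro a; simp [actF_of, π_of, sconj]
  exact DFunLike.congr_fun this w

/-- conjugation relator -/
def crel (s t : Sset G S₀) : FreeGroup (Sset G S₀) :=
  FreeGroup.of s * FreeGroup.of t * (FreeGroup.of s)⁻¹ *
    (FreeGroup.of (⟨MulAut.conjNormal ((s : G) : Γ) (t : G),
        conj_mem_Sset G S₀ ((s : G) : Γ) t.2⟩ : Sset G S₀))⁻¹

lemma crel_mem_Rconj (s t : Sset G S₀) : crel G S₀ s t ∈ Rconj G S₀ := ⟨s, t, rfl⟩

lemma crel_eq (s t : Sset G S₀) :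
    crel G S₀ s t = FreeGroup.of s * FreeGroup.of t * (FreeGroup.of s)⁻¹ *
      (FreeGroup.of (sconj G S₀ ((s : G) : Γ) t))⁻¹ := rfl

lemma actF_surj (γ : Γ) : Function.Surjective (actF G S₀ γ) := fun w =>
  ⟨actF G S₀ γ⁻¹ w, by rw [actF_actF, mul_inv_cancel, actF_one]⟩

end Aux

/-- If the normal subgroup `G ⊴ Γ` admits a weakly-finite `Γ`-equivariant presentation
and both `G` and `Γ` are finitely generated, then `G` admits a finite `Γ`-equivariant
presentation. -/
theorem stmt_15
    (hweak : ∃ (S₀ : Finset G) (R₀ : Finset (FreeGroup (Sset G S₀))),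
      IsWeaklyFiniteEquivariantPresentation G S₀ R₀)
    (hG : Group.FG G) (hΓ : Group.FG Γ) :
    ∃ (S₀ : Finset G) (R₀ : Finset (FreeGroup (Sset G S₀))),
      IsFiniteEquivariantPresentation G S₀ R₀ := by
  classical
  obtain ⟨S₀, R₀, hsurj, hker⟩ := hweak
  -- `S` generates `G`
  have hSgen : Subgroup.closure (Set.range (Subtype.val : Sset G S₀ → G)) = ⊤ := by
    rw [← FreeGroup.range_lift_eq_closure]
    exact MonoidHom.range_eq_top.2 hsurj
  -- every element of `G` lies in the closure of a finite subset of `S`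
  have hfin : ∀ g : G, ∃ V : Finset (Sset G S₀),
      g ∈ Subgroup.closure (Subtype.val '' (V : Set (Sset G S₀))) := by
    intro g
    have hg : g ∈ Subgroup.closure (Set.range (Subtype.val : Sset G S₀ → G)) := by
      rw [hSgen]; trivial
    refine Subgroup.closure_induction ?_ ?_ ?_ ?_ hg
    · rintro x ⟨a, rfl⟩
      exact ⟨{a}, Subgroup.subset_closure ⟨a, by simp, rfl⟩⟩
    · exact ⟨∅, one_mem _⟩
    · rintro x y hx hy ⟨V, hV⟩ ⟨W, hW⟩
      refine ⟨V ∪ W, mul_mem ?_ ?_⟩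
      · exact Subgroup.closure_mono (Set.image_mono (by simp)) hV
      · exact Subgroup.closure_mono (Set.image_mono (by simp)) hW
    · rintro x hx ⟨V, hV⟩; exact ⟨V, inv_mem hV⟩
  choose V hV using hfin
  obtain ⟨Wset, hWtop, hWfin⟩ := Group.fg_iff.mp hG
  -- the finite generating subset `T ⊆ S`, containing `S₀`
  set T : Finset (Sset G S₀) :=
    hWfin.toFinset.biUnion V ∪
      S₀.attach.image (fun t => (⟨t.1, ⟨1, t.1, t.2, by simp⟩⟩ : Sset G S₀)) with hT
  have hS₀T : ∀ t₀ ∈ S₀, ∀ (h : (t₀ : G) ∈ Sset G S₀), (⟨t₀, h⟩ : Sset G S₀) ∈ T := by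
    intro t₀ ht₀ h
    rw [hT]
    refine Finset.mem_union_right _ (Finset.mem_image.2 ⟨⟨t₀, ht₀⟩, S₀.mem_attach _, rfl⟩)
  have hTtop : Subgroup.closure (Subtype.val '' (T : Set (Sset G S₀))) = ⊤ := by
    rw [eq_top_iff, ← hWtop]
    refine (Subgroup.closure_le _).2 ?_
    intro w hw
    refine Subgroup.closure_mono (Set.image_mono ?_) (hV w)
    intro x hx
    rw [hT]
    exact Finset.mem_union_left _ (Finset.mem_biUnion.2 ⟨w, hWfin.mem_toFinset.2 hw, hx⟩)
  -- finite symmetric generating set of Γ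
  obtain ⟨Yset, hYtop, hYfin⟩ := Group.fg_iff.mp hΓ
  set Y : Finset Γ := hYfin.toFinset ∪ hYfin.toFinset.image (·⁻¹) with hYdef
  have hYsymm : ∀ y ∈ Y, y⁻¹ ∈ Y := by
    intro y hy
    rw [hYdef] at hy ⊢
    rcases Finset.mem_union.1 hy with h | h
    · exact Finset.mem_union_right _ (Finset.mem_image.2 ⟨y, h, rfl⟩)
    · rcases Finset.mem_image.1 h with ⟨b, hb, rfl⟩
      exact Finset.mem_union_left _ (by simpa using hb)
  have hYtop' : Subgroup.closure (Y : Set Γ) = ⊤ := by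
    rw [eq_top_iff, ← hYtop]
    refine (Subgroup.closure_le _).2 ?_
    intro y hy
    exact Subgroup.subset_closure (by rw [hYdef]; exact Finset.mem_union_left _ (by simpa using hy))
  -- words over `T` mapping to arbitrary elements of `G`
  have hωex : ∀ g : G, ∃ w, w ∈ Subgroup.closure
      (FreeGroup.of '' (T : Set (Sset G S₀))) ∧ π G S₀ w = g := by
    intro g
    have hmap : Subgroup.map (π G S₀)
        (Subgroup.closure (FreeGroup.of '' (T : Set (Sset G S₀)))) = ⊤ := by
      rw [MonoidHom.map_closure, Set.image_image]
      simp only [π_of]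
      exact hTtop
    have : g ∈ Subgroup.map (π G S₀)
        (Subgroup.closure (FreeGroup.of '' (T : Set (Sset G S₀)))) := by rw [hmap]; trivial
    obtain ⟨w, hw, hw2⟩ := this
    exact ⟨w, hw, hw2⟩
  choose ω hω1 hω2 using hωex
  -- the new relator set
  set X : Finset (FreeGroup (Sset G S₀)) :=
    (T ×ˢ T).image (fun p => crel G S₀ p.1 p.2) with hX
  set E : Finset (FreeGroup (Sset G S₀)) :=
    (Y ×ˢ T).image (fun p =>
      FreeGroup.of (sconj G S₀ p.1 p.2) * (ω (MulAut.conjNormal p.1 (p.2 : G)))⁻¹) with hE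
  set R₁ : Finset (FreeGroup (Sset G S₀)) := R₀ ∪ X ∪ E with hR₁
  set Gen : Set (FreeGroup (Sset G S₀)) :=
    {r | ∃ γ : Γ, ∃ r₀ ∈ R₁, actF G S₀ γ r₀ = r} with hGen
  set N : Subgroup (FreeGroup (Sset G S₀)) := Subgroup.normalClosure Gen with hN
  have hNnormal : N.Normal := Subgroup.normalClosure_normal
  have hmemN : ∀ r ∈ R₁, ∀ γ : Γ, actF G S₀ γ r ∈ N := by
    intro r hr γ
    exact Subgroup.subset_normalClosure ⟨γ, r, hr, rfl⟩
  have hmemN1 : ∀ r ∈ R₁, r ∈ N := by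
    intro r hr
    have := hmemN r hr 1
    rwa [actF_one] at this
  -- N is α-invariant
  have hNα : ∀ (γ : Γ) (w : FreeGroup (Sset G S₀)), w ∈ N → actF G S₀ γ w ∈ N := by
    intro γ w hw
    have hle : Subgroup.map (actF G S₀ γ) N ≤ N := by
      rw [hN, Subgroup.map_normalClosure _ _ (actF_surj G S₀ γ)]
      refine Subgroup.normalClosure_mono ?_
      rintro r ⟨r', ⟨δ, r₀, hr₀, rfl⟩, rfl⟩
      exact ⟨γ * δ, r₀, hr₀, (actF_actF G S₀ γ δ r₀).symm ▸ rfl⟩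
    exact hle (Subgroup.mem_map_of_mem _ hw)
  -- Claim 1 : modulo N, the free group is generated by the letters of T
  set J : Subgroup (FreeGroup (Sset G S₀)) :=
    Subgroup.closure (FreeGroup.of '' (T : Set (Sset G S₀))) ⊔ N with hJdef
  have hNJ : N ≤ J := le_sup_right
  have hclJ : Subgroup.closure (FreeGroup.of '' (T : Set (Sset G S₀))) ≤ J := le_sup_left
  have hmapJ : ∀ a : Γ, (∀ t ∈ T, FreeGroup.of (sconj G S₀ a t) ∈ J) →
      ∀ w ∈ J, actF G S₀ a w ∈ J := by
    intro a ha w hw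
    have hle : Subgroup.map (actF G S₀ a) J ≤ J := by
      rw [hJdef, Subgroup.map_sup, MonoidHom.map_closure]
      refine sup_le ?_ ?_
      · refine (Subgroup.closure_le _).2 ?_
        rintro x ⟨x', ⟨t, ht, rfl⟩, rfl⟩
        rw [actF_of]
        exact ha t ht
      · intro x hx
        obtain ⟨x', hx', rfl⟩ := Subgroup.mem_map.1 hx
        exact hNJ (hNα a x' hx')
    exact hle (Subgroup.mem_map_of_mem _ hw)
  have hEbase : ∀ y ∈ Y, ∀ t ∈ T, FreeGroup.of (sconj G S₀ y t) ∈ J := by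
    intro y hy t ht
    have hEmem : FreeGroup.of (sconj G S₀ y t) *
        (ω (MulAut.conjNormal y (t : G)))⁻¹ ∈ E :=
      Finset.mem_image.2 ⟨(y, t), Finset.mem_product.2 ⟨hy, ht⟩, rfl⟩
    have h1 : FreeGroup.of (sconj G S₀ y t) *
        (ω (MulAut.conjNormal y (t : G)))⁻¹ ∈ J := by
      refine hNJ (hmemN1 _ ?_)
      rw [hR₁]
      exact Finset.mem_union_right _ hEmem
    have h2 : ω (MulAut.conjNormal y (t : G)) ∈ J := hclJ (hω1 _)
    have := mul_mem h1 h2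
    rwa [inv_mul_cancel_right] at this
  have hconj : ∀ γ : Γ, ∀ t ∈ T,
      FreeGroup.of (sconj G S₀ γ t) ∈ J ∧ FreeGroup.of (sconj G S₀ γ⁻¹ t) ∈ J := by
    intro γ
    have hγ : γ ∈ Subgroup.closure (Y : Set Γ) := by rw [hYtop']; trivial
    refine Subgroup.closure_induction ?_ ?_ ?_ ?_ hγ
    · intro y hy t ht
      exact ⟨hEbase y hy t ht, hEbase y⁻¹ (hYsymm y hy) t ht⟩
    · intro t ht
      constructor
      · rw [sconj_one]
        exact hclJ (Subgroup.subset_closure ⟨t, ht, rfl⟩)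
      · rw [inv_one, sconj_one]
        exact hclJ (Subgroup.subset_closure ⟨t, ht, rfl⟩)
    · intro a b _ _ ha hb t ht
      constructor
      · rw [sconj_mul, ← actF_of]
        exact hmapJ a (fun u hu => (ha u hu).1) _ ((hb t ht).1)
      · rw [mul_inv_rev, sconj_mul, ← actF_of]
        exact hmapJ b⁻¹ (fun u hu => (hb u hu).2) _ ((ha t ht).2)
    · intro a _ ha t ht
      refine ⟨(ha t ht).2, ?_⟩
      rw [inv_inv]
      exact (ha t ht).1
  have hJtop : ∀ w, w ∈ J := by
    have htop : (⊤ : Subgroup (FreeGroup (Sset G S₀))) ≤ J := by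
      rw [← FreeGroup.closure_range_of]
      refine (Subgroup.closure_le _).2 ?_
      rintro x ⟨s, rfl⟩
      obtain ⟨γ, t₀, ht₀, hval⟩ := s.2
      have hs : s = sconj G S₀ γ ⟨t₀, ⟨1, t₀, ht₀, by simp⟩⟩ := Subtype.ext hval.symm
      rw [hs]
      exact (hconj γ _ (hS₀T t₀ ht₀ _)).1
    exact fun w => htop trivial
  -- the quotient by N
  haveI : N.Normal := hNnormal
  set q : FreeGroup (Sset G S₀) →* FreeGroup (Sset G S₀) ⧸ N := QuotientGroup.mk' N with hqdef
  have hqker : MonoidHom.ker q = N := QuotientGroup.ker_mk' N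
  have hqmem : ∀ a b, q a = q b ↔ a * b⁻¹ ∈ N := by
    intro a b
    constructor
    · intro h
      have h2 : q (a * b⁻¹) = 1 := by rw [map_mul, map_inv, h, mul_inv_cancel]
      have h3 : a * b⁻¹ ∈ q.ker := h2
      rwa [hqker] at h3
    · intro h
      have h3 : a * b⁻¹ ∈ q.ker := by rwa [hqker]
      have h2 : q (a * b⁻¹) = 1 := h3
      rw [map_mul, map_inv, mul_inv_eq_one] at h2
      exact h2
  have hqN : ∀ w ∈ N, q w = 1 := by
    intro w hw
    rw [← hqker] at hw
    exact hw
  have hqact : ∀ (γ : Γ) (a b), q a = q b → q (actF G S₀ γ a) = q (actF G S₀ γ b) := by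
    intro γ a b hab
    rw [hqmem] at hab ⊢
    have := hNα γ _ hab
    rwa [map_mul, map_inv] at this
  -- Step 2: conjugation by a letter of T agrees with the action
  have hstep2 : ∀ t ∈ T, ∀ w,
      q (FreeGroup.of t * w * (FreeGroup.of t)⁻¹) = q (actF G S₀ ((t : G) : Γ) w) := by
    intro t ht
    have key : ((MulAut.conj (q (FreeGroup.of t))).toMonoidHom).comp q
        = q.comp (actF G S₀ ((t : G) : Γ)) := by
      apply MonoidHom.ext
      intro w
      have hJle : J ≤ MonoidHom.eqLocus
          (((MulAut.conj (q (FreeGroup.of t))).toMonoidHom).comp q)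
          (q.comp (actF G S₀ ((t : G) : Γ))) := by
        rw [hJdef]
        refine sup_le ?_ ?_
        · refine (Subgroup.closure_le _).2 ?_
          rintro x ⟨u, hu, rfl⟩
          have hc : crel G S₀ t u ∈ N := by
            refine hmemN1 _ ?_
            rw [hR₁]
            refine Finset.mem_union_left _ (Finset.mem_union_right _ ?_)
            exact Finset.mem_image.2 ⟨(t, u), Finset.mem_product.2 ⟨ht, hu⟩, rfl⟩
          show MulAut.conj (q (FreeGroup.of t)) (q (FreeGroup.of u))
              = q (actF G S₀ ((t : G) : Γ) (FreeGroup.of u))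
          rw [MulAut.conj_apply, actF_of, ← map_inv, ← map_mul, ← map_mul]
          rw [hqmem]
          exact hc
        · intro n hn
          show MulAut.conj (q (FreeGroup.of t)) (q n)
              = q (actF G S₀ ((t : G) : Γ) n)
          rw [hqN n hn, map_one, hqN _ (hNα _ n hn)]
      exact hJle (hJtop w)
    intro w
    have hw := DFunLike.congr_fun key w
    simp only [MonoidHom.comp_apply, MulEquiv.coe_toMonoidHom, MulAut.conj_apply] at hw
    rw [map_mul, map_mul, map_inv]
    exact hw
  -- Step 3: all conjugation relators lie in N
  have hmain : ∀ s v : Sset G S₀, crel G S₀ s v ∈ N := by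
    intro s v
    obtain ⟨γ, t₀, ht₀, hval⟩ := s.2
    have htT : (⟨t₀, ⟨1, t₀, ht₀, by simp⟩⟩ : Sset G S₀) ∈ T := hS₀T t₀ ht₀ _
    set t : Sset G S₀ := ⟨t₀, ⟨1, t₀, ht₀, by simp⟩⟩ with htdef
    have hs : s = sconj G S₀ γ t := Subtype.ext hval.symm
    have hsΓ : ((s : G) : Γ) = γ * ((t : G) : Γ) * γ⁻¹ := by
      rw [hs]
      exact MulAut.conjNormal_apply γ (t : G)
    set w' := actF G S₀ γ⁻¹ (FreeGroup.of v) with hw'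
    have hw'2 : actF G S₀ γ w' = FreeGroup.of v := by
      rw [hw', actF_actF, mul_inv_cancel, actF_one]
    have hofs : FreeGroup.of s = actF G S₀ γ (FreeGroup.of t) := by
      rw [actF_of, hs]
    have hexp : actF G S₀ γ (FreeGroup.of t * w' * (FreeGroup.of t)⁻¹)
        = actF G S₀ γ (FreeGroup.of t) * actF G S₀ γ w' * (actF G S₀ γ (FreeGroup.of t))⁻¹ := by
      rw [map_mul, map_mul, map_inv]
    have h1 : q (FreeGroup.of s * FreeGroup.of v * (FreeGroup.of s)⁻¹)
        = q (actF G S₀ γ (FreeGroup.of t * w' * (FreeGroup.of t)⁻¹)) := by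
      rw [hexp, hofs, hw'2]
    have h2 : q (actF G S₀ γ (FreeGroup.of t * w' * (FreeGroup.of t)⁻¹))
        = q (actF G S₀ γ (actF G S₀ ((t : G) : Γ) w')) :=
      hqact γ _ _ (hstep2 t htT w')
    have hmulΓ : ((s : G) : Γ) * γ = γ * ((t : G) : Γ) := by rw [hsΓ]; group
    have h3 : actF G S₀ γ (actF G S₀ ((t : G) : Γ) w')
        = actF G S₀ ((s : G) : Γ) (FreeGroup.of v) := by
      rw [actF_actF, ← hmulΓ, ← actF_actF, hw'2]
    have hfinal : q (crel G S₀ s v) = 1 := by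
      rw [crel_eq, map_mul, map_inv, h1, h2, h3, actF_of]
      exact mul_inv_cancel _
    rw [← hqker]
    exact hfinal
  -- Assemble the finite equivariant presentation
  refine ⟨S₀, R₁, hsurj, ?_⟩
  have hgoal : MonoidHom.ker (π G S₀) = N := by
    apply le_antisymm
    · rw [hker]
      refine Subgroup.normalClosure_le_normal ?_
      rintro r (⟨γ, r₀, hr₀, rfl⟩ | hrc)
      · refine hmemN r₀ ?_ γ
        rw [hR₁]
        exact Finset.mem_union_left _ (Finset.mem_union_left _ hr₀)
      · obtain ⟨s, v, rfl⟩ := hrc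
        exact hmain s v
    · refine Subgroup.normalClosure_le_normal ?_
      rintro r ⟨γ, r₀, hr₀, rfl⟩
      have hr₀ker : π G S₀ r₀ = 1 := by
        rw [hR₁] at hr₀
        rcases Finset.mem_union.1 hr₀ with h | hE'
        · rcases Finset.mem_union.1 h with hR | hX'
          · have : r₀ ∈ MonoidHom.ker (π G S₀) := by
              rw [hker]
              exact Subgroup.subset_normalClosure (Or.inl ⟨1, r₀, hR, actF_one G S₀ r₀⟩)
            exact this
          · obtain ⟨⟨a, b⟩, _, rfl⟩ := Finset.mem_image.1 hX'
            have : crel G S₀ a b ∈ MonoidHom.ker (π G S₀) := by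
              rw [hker]
              exact Subgroup.subset_normalClosure (Or.inr (crel_mem_Rconj G S₀ a b))
            exact this
        · obtain ⟨⟨y, u⟩, _, rfl⟩ := Finset.mem_image.1 hE'
          rw [map_mul, map_inv, π_of, hω2]
          show (sconj G S₀ y u : G) * (MulAut.conjNormal y (u : G))⁻¹ = 1
          rw [mul_inv_eq_one]
          rfl
      show actF G S₀ γ r₀ ∈ MonoidHom.ker (π G S₀)
      rw [MonoidHom.mem_ker, π_actF, hr₀ker, map_one]
  rw [hgoal, hN, hGen]

end Stmt15
end

section
/- Let Γ be a group and G ⫳ Γ a normal subgroup, with Γ acting on G by conjugation. Suppose S₀ ⊆ G and S = Γ·S₀, and let R' ⊆ F(S) be a Γ-invariant set of relations such that for all s₀ ∈ S₀ and u ∈ S, s₀ u s₀⁻¹ ≡ ^{s₀} u modulo R'. Then for all s, t ∈ S, s t s⁻¹ ≡ ^s t modulo R'. -/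
/-!
Write `s = ^γ s₀` with `s₀ ∈ S₀`. The automorphism of `F(S)` induced by `γ` carries the relator
`s₀ u s₀⁻¹ (^{s₀} u)⁻¹` to `s (^γ u) s⁻¹ (^s (^γ u))⁻¹`, and by `Γ`-invariance of `R'` it preserves
the normal closure of `R'`; taking `u = ^{γ⁻¹} t` gives the claim.
-/

namespace Stmt18

variable {Γ : Type} [Group Γ] (G : Subgroup Γ) [G.Normal]

/-- The set `S = Γ·S₀` of conjugates of elements of `S₀ ⊆ G` by elements of `Γ`. -/
def Sset (S₀ : Set G) : Set G :=
  {g | ∃ γ : Γ, ∃ s ∈ S₀, MulAut.conjNormal γ s = g}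

lemma conj_mem_Sset (S₀ : Set G) (γ : Γ) {g : G} (hg : g ∈ Sset G S₀) :
    MulAut.conjNormal γ g ∈ Sset G S₀ := by
  obtain ⟨γ', s, hs, rfl⟩ := hg
  exact ⟨γ * γ', s, hs, by rw [map_mul]; rfl⟩

/-- The induced `Γ`-action (by conjugation) on the free group `F(S)`. -/
def actF (S₀ : Set G) (γ : Γ) : FreeGroup (Sset G S₀) →* FreeGroup (Sset G S₀) :=
  FreeGroup.map fun x => ⟨MulAut.conjNormal γ (x : G), conj_mem_Sset G S₀ γ x.2⟩

theorem _root_.Subgroup.map_mem_normalClosure {H K : Type*} [Group H] [Group K] {f : H →* K}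
    {R : Set H} {T : Set K} (hR : f '' R ⊆ Subgroup.normalClosure T) {x : H}
    (hx : x ∈ Subgroup.normalClosure R) : f x ∈ Subgroup.normalClosure T :=
  Subgroup.normalClosure_le_normal hR (Subgroup.comap_normalClosure_image_ge R f hx)

variable {G}

def conjS (S₀ : Set G) (γ : Γ) (s : Sset G S₀) : Sset G S₀ :=
  ⟨MulAut.conjNormal γ (s : G), conj_mem_Sset G S₀ γ s.2⟩

def conjRelator (S₀ : Set G) (s t : Sset G S₀) : FreeGroup (Sset G S₀) :=
  FreeGroup.of s * FreeGroup.of t * (FreeGroup.of s)⁻¹ *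
    (FreeGroup.of (conjS S₀ ((s : G) : Γ) t))⁻¹

theorem conjS_mul (S₀ : Set G) (γ δ : Γ) (s : Sset G S₀) :
    conjS S₀ (γ * δ) s = conjS S₀ γ (conjS S₀ δ s) := by
  ext : 1
  simp only [conjS, map_mul]
  rfl

theorem conjS_inv_cancel (S₀ : Set G) (γ : Γ) (s : Sset G S₀) :
    conjS S₀ γ (conjS S₀ γ⁻¹ s) = s := by
  rw [← conjS_mul, mul_inv_cancel]
  ext : 1
  simp [conjS]

theorem conjS_conjS (S₀ : Set G) (γ : Γ) (s t : Sset G S₀) :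
    conjS S₀ ((conjS S₀ γ s : G) : Γ) (conjS S₀ γ t) = conjS S₀ γ (conjS S₀ ((s : G) : Γ) t) := by
  ext
  simp [conjS, MulAut.conjNormal_apply, mul_assoc]

theorem actF_of (S₀ : Set G) (γ : Γ) (s : Sset G S₀) :
    actF G S₀ γ (FreeGroup.of s) = FreeGroup.of (conjS S₀ γ s) :=
  FreeGroup.map.of

theorem actF_conjRelator (S₀ : Set G) (γ : Γ) (s t : Sset G S₀) :
    actF G S₀ γ (conjRelator S₀ s t) = conjRelator S₀ (conjS S₀ γ s) (conjS S₀ γ t) := by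
  simp only [conjRelator, map_mul, map_inv, actF_of, conjS_conjS]

/-- Let `G ⊴ Γ`, `S = Γ·S₀`, and let `R' ⊆ F(S)` be a `Γ`-invariant set of relations
such that `s₀ u s₀⁻¹ ≡ ^{s₀} u` modulo `R'` for all `s₀ ∈ S₀` and `u ∈ S`.  Then
`s t s⁻¹ ≡ ^s t` modulo `R'` for all `s, t ∈ S`. -/
theorem stmt_18 (S₀ : Set G)
    (R' : Set (FreeGroup (Sset G S₀)))
    (hRinv : ∀ γ : Γ, ∀ r ∈ R', actF G S₀ γ r ∈ Subgroup.normalClosure R')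
    (hbase : ∀ s₀ : Sset G S₀, (s₀ : G) ∈ S₀ → ∀ u : Sset G S₀,
      FreeGroup.of s₀ * FreeGroup.of u * (FreeGroup.of s₀)⁻¹ *
        (FreeGroup.of (⟨MulAut.conjNormal ((s₀ : G) : Γ) (u : G),
          conj_mem_Sset G S₀ ((s₀ : G) : Γ) u.2⟩ : Sset G S₀))⁻¹ ∈
        Subgroup.normalClosure R') :
    ∀ s t : Sset G S₀,
      FreeGroup.of s * FreeGroup.of t * (FreeGroup.of s)⁻¹ *
        (FreeGroup.of (⟨MulAut.conjNormal ((s : G) : Γ) (t : G),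
          conj_mem_Sset G S₀ ((s : G) : Γ) t.2⟩ : Sset G S₀))⁻¹ ∈
        Subgroup.normalClosure R' := by
  rintro s t
  obtain ⟨γ, s₀, hs₀, hγs₀⟩ := s.2
  let s₀' : Sset G S₀ := ⟨s₀, 1, s₀, hs₀, by simp⟩
  have hs : conjS S₀ γ s₀' = s := Subtype.ext hγs₀
  have h : actF G S₀ γ (conjRelator S₀ s₀' (conjS S₀ γ⁻¹ t)) ∈ Subgroup.normalClosure R' :=
    Subgroup.map_mem_normalClosure (by rintro _ ⟨r, hr, rfl⟩; exact hRinv γ r hr)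
      (hbase s₀' hs₀ (conjS S₀ γ⁻¹ t))
  rwa [actF_conjRelator, hs, conjS_inv_cancel] at h

end Stmt18
end
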